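/- Let G be a non-abelian finite simple group in which every maximal subgroup has even order. Then the intersection graph Δ_G is connected with diameter at most 4. -/

import Mathlib

/-!
Every proper nontrivial subgroup lies in a maximal subgroup, which by hypothesis contains an
involution. Two involutions `s, t` generate a dihedral group, and it is proper: both invert
`s * t`, so `⟨s * t⟩` is normal in `⟨s, t⟩`; were `⟨s, t⟩ = G`, simplicity would make `⟨s * t⟩`
trivial (so `s = t`) or all of `G`, and `G` would be cyclic either way. Hence
`S – M₁ – ⟨s, t⟩ – M₂ – T` is a walk of length at most `4` between any two vertices.
-/

/-- The intersection graph of a group `G`: vertices are the proper nontrivial subgroups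
of `G`, with two distinct subgroups adjacent iff they intersect nontrivially. -/
def intersectionGraph (G : Type*) [Group G] :
    SimpleGraph {H : Subgroup G // H ≠ ⊥ ∧ H ≠ ⊤} where
  Adj S T := S ≠ T ∧ S.1 ⊓ T.1 ≠ ⊥
  symm := ⟨fun S T ⟨h1, h2⟩ => ⟨h1.symm, by rwa [inf_comm] at h2⟩⟩
  loopless := ⟨fun S h => h.1 rfl⟩

namespace SimpleGraph

lemma connected_and_dist_le_of_forall_edist_le {V : Type*} {G : SimpleGraph V} [Nonempty V]
    {n : ℕ} (h : ∀ u v, G.edist u v ≤ n) : G.Connected ∧ ∀ u v, G.dist u v ≤ n :=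
  ⟨⟨fun u v => edist_ne_top_iff_reachable.1 (ne_top_of_le_ne_top (ENat.natCast_ne_top n) (h u v))⟩,
    fun u v => ENat.toNat_le_of_le_natCast (h u v)⟩

end SimpleGraph

namespace Subgroup

variable {G : Type*} [Group G]

lemma exists_orderOf_eq_two_mem_of_even_card [Finite G] {H : Subgroup G}
    (h : Even (Nat.card H)) : ∃ t ∈ H, orderOf t = 2 := by
  obtain ⟨t, ht⟩ := exists_prime_orderOf_dvd_card' 2 h.two_dvd
  exact ⟨t, t.2, by rwa [orderOf_coe]⟩

lemma zpowers_ne_top_of_not_isCyclic (hG : ¬ IsCyclic G) (x : G) : zpowers x ≠ ⊤ :=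
  fun hx => hG (isCyclic_iff_exists_zpowers_eq_top.2 ⟨x, hx⟩)

lemma mem_normalizer_zpowers_of_conj_eq_inv {g x : G} (h : g * x * g⁻¹ = x⁻¹) :
    g ∈ normalizer (zpowers x : Set G) := by
  rw [mem_normalizer_iff_map_conj_eq, MonoidHom.map_zpowers]
  simp [MulAut.conj_apply, h, zpowers_inv]

lemma closure_pair_ne_top_of_sq_eq_one [IsSimpleGroup G] (hG : ¬ IsCyclic G) {s t : G}
    (hs : s ^ 2 = 1) (ht : t ^ 2 = 1) : closure {s, t} ≠ ⊤ := by
  intro hst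
  have hs' : s⁻¹ = s := inv_eq_of_mul_eq_one_right (by rwa [← sq])
  have ht' : t⁻¹ = t := inv_eq_of_mul_eq_one_right (by rwa [← sq])
  have hnormal : (zpowers (s * t)).Normal := by
    rw [← normalizer_eq_top_iff, eq_top_iff, ← hst, closure_le]
    rintro g (rfl | rfl) <;> apply mem_normalizer_zpowers_of_conj_eq_inv
    · rw [mul_inv_rev, hs', ht', ← mul_assoc, ← sq, hs, one_mul]
    · rw [mul_inv_rev, ht', mul_assoc, mul_assoc, ← sq, ht, mul_one, hs']
  rcases hnormal.eq_bot_or_eq_top with hbot | htop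
  · rw [zpowers_eq_bot, mul_eq_one_iff_eq_inv, ht'] at hbot
    subst hbot
    rw [Set.pair_eq_singleton, ← zpowers_eq_closure] at hst
    exact zpowers_ne_top_of_not_isCyclic hG s hst
  · exact zpowers_ne_top_of_not_isCyclic hG _ htop

end Subgroup

open Subgroup

section IntersectionGraph

variable {G : Type*} [Group G]

lemma intersectionGraph_edist_le_one_of_inf_ne_bot {S T : {H : Subgroup G // H ≠ ⊥ ∧ H ≠ ⊤}}
    (h : S.1 ⊓ T.1 ≠ ⊥) : (intersectionGraph G).edist S T ≤ 1 := by
  rw [SimpleGraph.edist_le_one_iff_adj_or_eq]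
  by_cases hST : S = T
  · exact .inr hST
  · exact .inl ⟨hST, h⟩

lemma intersectionGraph_edist_le_one_of_le {S T : {H : Subgroup G // H ≠ ⊥ ∧ H ≠ ⊤}}
    (h : S.1 ≤ T.1) : (intersectionGraph G).edist S T ≤ 1 :=
  intersectionGraph_edist_le_one_of_inf_ne_bot (by rw [inf_eq_left.2 h]; exact S.2.1)

lemma intersectionGraph_edist_le_one_of_mem {S T : {H : Subgroup G // H ≠ ⊥ ∧ H ≠ ⊤}} {t : G}
    (hS : t ∈ S.1) (hT : t ∈ T.1) (ht : t ≠ 1) : (intersectionGraph G).edist S T ≤ 1 :=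
  intersectionGraph_edist_le_one_of_inf_ne_bot <|
    ne_bot_of_le_ne_bot (zpowers_ne_bot.2 ht) (zpowers_le.2 (mem_inf.2 ⟨hS, hT⟩))

lemma exists_vertex_ge_with_orderOf_eq_two [Finite G]
    (hmax : ∀ M : Subgroup G, IsCoatom M → Even (Nat.card M))
    (S : {H : Subgroup G // H ≠ ⊥ ∧ H ≠ ⊤}) :
    ∃ (M : {H : Subgroup G // H ≠ ⊥ ∧ H ≠ ⊤}) (t : G), S.1 ≤ M.1 ∧ t ∈ M.1 ∧ orderOf t = 2 := by
  obtain ⟨M, hM, hSM⟩ := (eq_top_or_exists_le_coatom S.1).resolve_left S.2.2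
  obtain ⟨t, htM, ht⟩ := exists_orderOf_eq_two_mem_of_even_card (hmax M hM)
  exact ⟨⟨M, ne_bot_of_le_ne_bot S.2.1 hSM, hM.1⟩, t, hSM, htM, ht⟩

lemma intersectionGraph_edist_le_four [Finite G] [IsSimpleGroup G] (hG : ¬ IsCyclic G)
    (hmax : ∀ M : Subgroup G, IsCoatom M → Even (Nat.card M))
    (S T : {H : Subgroup G // H ≠ ⊥ ∧ H ≠ ⊤}) : (intersectionGraph G).edist S T ≤ 4 := by
  obtain ⟨M₁, s, hSM₁, hsM₁, hs⟩ := exists_vertex_ge_with_orderOf_eq_two hmax S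
  obtain ⟨M₂, t, hTM₂, htM₂, ht⟩ := exists_vertex_ge_with_orderOf_eq_two hmax T
  obtain ⟨hs2, hs1⟩ := orderOf_eq_prime_iff.1 hs
  obtain ⟨ht2, ht1⟩ := orderOf_eq_prime_iff.1 ht
  have hsD : s ∈ closure {s, t} := subset_closure (by simp)
  have htD : t ∈ closure {s, t} := subset_closure (by simp)
  let D : {H : Subgroup G // H ≠ ⊥ ∧ H ≠ ⊤} :=
    ⟨closure {s, t}, ne_bot_of_le_ne_bot (zpowers_ne_bot.2 hs1) (zpowers_le.2 hsD),
      closure_pair_ne_top_of_sq_eq_one hG hs2 ht2⟩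
  calc (intersectionGraph G).edist S T
      ≤ (intersectionGraph G).edist S M₁ + (intersectionGraph G).edist M₁ D +
        (intersectionGraph G).edist D M₂ + (intersectionGraph G).edist M₂ T := by
        refine (SimpleGraph.edist_triangle (v := M₂)).trans ?_
        gcongr
        refine (SimpleGraph.edist_triangle (v := D)).trans ?_
        gcongr
        exact SimpleGraph.edist_triangle
    _ ≤ 1 + 1 + 1 + 1 := by
        gcongr
        · exact intersectionGraph_edist_le_one_of_le hSM₁
        · exact intersectionGraph_edist_le_one_of_mem hsM₁ hsD hs1
        · exact intersectionGraph_edist_le_one_of_mem htD htM₂ ht1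
        · rw [SimpleGraph.edist_comm]; exact intersectionGraph_edist_le_one_of_le hTM₂
    _ = 4 := rfl

end IntersectionGraph

/-- Let `G` be a non-abelian finite simple group in which every maximal subgroup has even
order. Then the intersection graph `Δ_G` is connected with diameter at most `4`. -/
theorem intersectionGraph_diam_le_four_of_maximal_even
    (G : Type*) [Group G] [Finite G] [IsSimpleGroup G]
    (hna : ¬ ∀ a b : G, a * b = b * a)
    (hmax : ∀ M : Subgroup G, IsCoatom M → Even (Nat.card M)) :
    (intersectionGraph G).Connected ∧
      ∀ S T : {H : Subgroup G // H ≠ ⊥ ∧ H ≠ ⊤},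
        (intersectionGraph G).dist S T ≤ 4 := by
  have hG : ¬ IsCyclic G := fun _ => hna mul_comm'
  obtain ⟨x, hx⟩ := exists_ne (1 : G)
  have : Nonempty {H : Subgroup G // H ≠ ⊥ ∧ H ≠ ⊤} :=
    ⟨⟨zpowers x, zpowers_ne_bot.2 hx, zpowers_ne_top_of_not_isCyclic hG x⟩⟩
  exact SimpleGraph.connected_and_dist_le_of_forall_edist_le
    (intersectionGraph_edist_le_four hG hmax)
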